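/- arXiv:2504.16496 — 2 statements merged into one kernel-verified Lean document; each statement's English description precedes it below -/
import Mathlib

section
/- Let Ω ⊆ ℂ be open, Λ an open subset of a complex Banach space, λ₀ ∈ Λ, and F : Λ × Ω → ℂ a continuous map which is holomorphic in each variable separately (z ↦ F(λ, z) is holomorphic on Ω for each λ, and λ ↦ F(λ, z) is holomorphic on Λ for each z); put f₀ := F(λ₀, ·), and let X ⊆ Ω be a hyperbolic set for f₀. Let N ⊆ Λ be a connected open neighborhood of λ₀ and h₁, h₂ : N × X → Ω two continuous maps such that for i = 1, 2: h_i(λ₀, x) = x for all x ∈ X, x ↦ h_i(λ, x) is injective on X for each λ ∈ N, λ ↦ h_i(λ, x) is holomorphic on N for each x ∈ X, and F(λ, h_i(λ, x)) = h_i(λ, f₀(x)) for all (λ, x) ∈ N × X. Then h₁ = h₂ on N × X. -/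
open Filter Metric Set Topology

noncomputable section

/-- `X` is a hyperbolic set of the holomorphic map `f` defined on the open set `Ω ⊆ ℂ`. -/
def IsHypSet (f : ℂ → ℂ) (Ω X : Set ℂ) : Prop :=
  IsCompact X ∧ X ⊆ Ω ∧ Set.MapsTo f X X ∧
    ∃ c : ℝ, 0 < c ∧ ∃ μ : ℝ, 1 < μ ∧
      ∀ x ∈ X, ∀ k : ℕ, 1 ≤ k → c * μ ^ k ≤ ‖deriv (f^[k]) x‖

/-- `h` is a continuous motion of `X` over `N`, based at `lam₀`, injective in the space
variable, with values in `Ω`, conjugating the dynamics. -/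
def IsConjMotion {Λ : Type*} [TopologicalSpace Λ] (F : Λ → ℂ → ℂ) (lam₀ : Λ)
    (Ω X : Set ℂ) (N : Set Λ) (h : Λ → ℂ → ℂ) : Prop :=
  ContinuousOn (fun p : Λ × ℂ => h p.1 p.2) (N ×ˢ X) ∧
  (∀ x ∈ X, h lam₀ x = x) ∧
  (∀ lam ∈ N, Set.InjOn (h lam) X) ∧
  (∀ lam ∈ N, ∀ x ∈ X, h lam x ∈ Ω) ∧
  (∀ lam ∈ N, ∀ x ∈ X, F lam (h lam x) = h lam (F lam₀ x))

/-!
Fix `k` with `|(f₀^k)'| ≥ 3` on `X`. For `λ` near `λ₀` the iterate `F_λ^k` is `C¹`-close to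
`f₀^k` on a neighbourhood of `X`, so it expands distances by a factor `2` on small discs around
the points of `X`, and `h₁(λ, x)`, `h₂(λ, x)` both lie in such a disc around `x`. The conjugacy
then gives `|h₁(λ, f₀^k x) - h₂(λ, f₀^k x)| ≥ 2 |h₁(λ, x) - h₂(λ, x)|`, which forces
`h₁(λ, ·) = h₂(λ, ·)` at a point where `|h₁(λ, ·) - h₂(λ, ·)|` is maximal on `X`, hence everywhere
on `X`. So `h₁ = h₂` near `λ₀`, and on the connected set `N` by the identity theorem for the
holomorphic maps `λ ↦ hᵢ(λ, x)`.
-/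

theorem ContinuousOn.tendstoUniformlyOn_of_isCompact {α β γ : Type*} [TopologicalSpace α]
    [TopologicalSpace β] [PseudoMetricSpace γ] {f : α → β → γ} {s : Set α} {t K : Set β} {x : α}
    (hs : s ∈ 𝓝 x) (hf : ContinuousOn ↿f (s ×ˢ t)) (hK : IsCompact K) (hKt : K ⊆ t) :
    TendstoUniformlyOn f (f x) (𝓝 x) K := by
  rw [Metric.tendstoUniformlyOn_iff]
  intro ε hε
  suffices ∀ᶠ a in 𝓝 x, ∀ y ∈ K, y ∈ t → dist (f x y) (f a y) < ε from
    this.mono fun a h y hy => h y hy (hKt hy)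
  refine hK.eventually_forall_of_forall_eventually fun y hy => ?_
  have hnear : ∀ᶠ p in 𝓝 (x, y), p ∈ s ×ˢ t → dist (↿f p) (f x y) < ε / 2 :=
    eventually_nhdsWithin_iff.mp <|
      (hf _ ⟨mem_of_mem_nhds hs, hKt hy⟩).eventually (ball_mem_nhds _ (half_pos hε))
  have hnear₀ : ∀ᶠ p : α × β in 𝓝 (x, y), (x, p.2) ∈ s ×ˢ t → dist (f x p.2) (f x y) < ε / 2 :=
    (continuous_const.prodMk continuous_snd).tendsto (x, y) |>.eventually hnear
  filter_upwards [hnear, hnear₀, continuous_fst.tendsto (x, y) |>.eventually hs]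
    with p h h₀ hp₁ hp₂
  calc dist (f x p.2) (f p.1 p.2) ≤ dist (f x p.2) (f x y) + dist (f p.1 p.2) (f x y) :=
        dist_triangle_right _ _ _
    _ < ε / 2 + ε / 2 := add_lt_add (h₀ ⟨mem_of_mem_nhds hs, hp₂⟩) (h ⟨hp₁, hp₂⟩)
    _ = ε := add_halves ε

theorem Convex.mul_norm_sub_le_norm_image_sub {f : ℂ → ℂ} {s : Set ℂ} (hs : Convex ℝ s)
    (hf : ∀ w ∈ s, DifferentiableAt ℂ f w) {a : ℂ} {C : ℝ} (hC : ∀ w ∈ s, ‖deriv f w - a‖ ≤ C)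
    {y y' : ℂ} (hy : y ∈ s) (hy' : y' ∈ s) : (‖a‖ - C) * ‖y - y'‖ ≤ ‖f y - f y'‖ := by
  have hderiv : ∀ w ∈ s, HasDerivAt (fun w => f w - a * w) (deriv f w - a) w := fun w hw =>
    (hf w hw).hasDerivAt.sub (by simpa using (hasDerivAt_id w).const_mul a)
  have hmvt : ‖f y - a * y - (f y' - a * y')‖ ≤ C * ‖y - y'‖ :=
    hs.norm_image_sub_le_of_norm_deriv_le (fun w hw => (hderiv w hw).differentiableAt)
      (fun w hw => (hderiv w hw).deriv ▸ hC w hw) hy' hy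
  have hlin : ‖a * (y - y')‖ ≤ ‖f y - f y'‖ + ‖f y - a * y - (f y' - a * y')‖ := by
    calc ‖a * (y - y')‖ = ‖(f y - f y') - (f y - a * y - (f y' - a * y'))‖ := by ring_nf
      _ ≤ _ := norm_sub_le _ _
  rw [norm_mul] at hlin
  linarith

theorem IsCompact.eqOn_of_dist_expanding {α β : Type*} [TopologicalSpace α] [MetricSpace β]
    {X : Set α} (hX : IsCompact X) {u v : α → β} (hu : ContinuousOn u X) (hv : ContinuousOn v X)
    {T : α → α} (hT : MapsTo T X X) {L : ℝ} (hL : 1 < L)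
    (hexp : ∀ x ∈ X, L * dist (u x) (v x) ≤ dist (u (T x)) (v (T x))) : EqOn u v X := by
  rcases X.eq_empty_or_nonempty with rfl | hne
  · exact eqOn_empty u v
  obtain ⟨x₀, hx₀, hmax⟩ :=
    hX.exists_isMaxOn hne (continuous_dist.comp_continuousOn (hu.prodMk hv))
  have hmax₀ : dist (u x₀) (v x₀) ≤ 0 := by
    have : L * dist (u x₀) (v x₀) ≤ dist (u x₀) (v x₀) := (hexp x₀ hx₀).trans (hmax (hT hx₀))
    nlinarith [dist_nonneg (x := u x₀) (y := v x₀)]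
  exact fun x hx => dist_le_zero.mp ((hmax hx).trans hmax₀)

theorem Set.MapsTo.iterate_semiconj_apply {α β : Type*} {X : Set α} {g : α → α} {f : β → β}
    {φ : α → β} (hg : MapsTo g X X) (h : ∀ x ∈ X, f (φ x) = φ (g x)) (k : ℕ) :
    ∀ x ∈ X, f^[k] (φ x) = φ (g^[k] x) := by
  induction k with
  | zero => simp
  | succ k ih =>
    intro x hx
    rw [Function.iterate_succ_apply, h x hx, ih _ (hg hx), Function.iterate_succ_apply]

def IsHolomorphicFamilyOn {P : Type*} [TopologicalSpace P] (G : P → ℂ → ℂ) (V : Set P)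
    (U : Set ℂ) : Prop :=
  ContinuousOn ↿G (V ×ˢ U) ∧ ∀ p ∈ V, DifferentiableOn ℂ (G p) U

namespace IsHolomorphicFamilyOn

variable {P : Type*} [TopologicalSpace P] {G F : P → ℂ → ℂ} {V V' : Set P} {U U' : Set ℂ}

theorem mono (hG : IsHolomorphicFamilyOn G V U) (hV : V' ⊆ V) (hU : U' ⊆ U) :
    IsHolomorphicFamilyOn G V' U' :=
  ⟨hG.1.mono (prod_mono hV hU), fun p hp => (hG.2 p (hV hp)).mono hU⟩

theorem comp (hG : IsHolomorphicFamilyOn G V U) (hF : IsHolomorphicFamilyOn F V U')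
    (hmaps : ∀ p ∈ V, MapsTo (F p) U' U) :
    IsHolomorphicFamilyOn (fun p => G p ∘ F p) V U' := by
  refine ⟨?_, fun p hp => (hG.2 p hp).comp (hF.2 p hp) (hmaps p hp)⟩
  exact hG.1.comp (continuous_fst.continuousOn.prodMk hF.1) fun q hq => ⟨hq.1, hmaps _ hq.1 hq.2⟩

theorem exists_nhds_mapsTo (hF : IsHolomorphicFamilyOn F V U') (hV : IsOpen V) (hU' : IsOpen U')
    {p₀ : P} (hp₀ : p₀ ∈ V) {K : Set ℂ} (hK : IsCompact K) (hKU' : K ⊆ U')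
    (hU : IsOpen U) (hmaps : MapsTo (F p₀) K U) :
    ∃ W W', IsOpen W ∧ IsOpen W' ∧ p₀ ∈ W ∧ K ⊆ W' ∧ W ⊆ V ∧ W' ⊆ U' ∧
      ∀ p ∈ W, MapsTo (F p) W' U := by
  have hopen : IsOpen ((V ×ˢ U') ∩ ↿F ⁻¹' U) := hF.1.isOpen_inter_preimage (hV.prod hU') hU
  obtain ⟨A, B, hA, hB, hp₀A, hKB, hAB⟩ := generalized_tube_lemma isCompact_singleton hK hopen
    (by rintro ⟨p, z⟩ ⟨rfl, hz⟩; exact ⟨⟨hp₀, hKU' hz⟩, hmaps hz⟩)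
  refine ⟨A ∩ V, B ∩ U', hA.inter hV, hB.inter hU', ⟨hp₀A rfl, hp₀⟩, subset_inter hKB hKU',
    inter_subset_right, inter_subset_right, fun p hp z hz => (hAB (mk_mem_prod hp.1 hz.1)).2⟩

theorem exists_nhds_iterate (hF : IsHolomorphicFamilyOn F V U) (hV : IsOpen V) (hU : IsOpen U)
    {p₀ : P} (hp₀ : p₀ ∈ V) {K : Set ℂ} (hK : IsCompact K) (hKU : K ⊆ U)
    (hmaps : MapsTo (F p₀) K K) (k : ℕ) :
    ∃ W W', IsOpen W ∧ IsOpen W' ∧ p₀ ∈ W ∧ K ⊆ W' ∧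
      IsHolomorphicFamilyOn (fun p => (F p)^[k]) W W' := by
  induction k with
  | zero =>
    exact ⟨V, U, hV, hU, hp₀, hKU, continuous_snd.continuousOn, fun _ _ => differentiableOn_id⟩
  | succ k ih =>
    obtain ⟨W, W', hW, hW', hp₀W, hKW', hiter⟩ := ih
    obtain ⟨A, B, hA, hB, hp₀A, hKB, hAV, hBU, hAB⟩ :=
      hF.exists_nhds_mapsTo hV hU hp₀ hK hKU hW' (hmaps.mono_right hKW')
    refine ⟨A ∩ W, B, hA.inter hW, hB, ⟨hp₀A, hp₀W⟩, hKB, ?_⟩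
    simp only [Function.iterate_succ]
    exact (hiter.mono inter_subset_right subset_rfl).comp
      (hF.mono (inter_subset_left.trans hAV) hBU) fun p hp => hAB p hp.1

end IsHolomorphicFamilyOn

theorem exists_eventually_expanding_of_tendstoLocallyUniformlyOn {ι : Type*} {l : Filter ι}
    {G : ι → ℂ → ℂ} {g : ℂ → ℂ} {U X : Set ℂ} (hG : TendstoLocallyUniformlyOn G g l U)
    (hGd : ∀ᶠ i in l, DifferentiableOn ℂ (G i) U) (hg : DifferentiableOn ℂ g U) (hU : IsOpen U)
    (hX : IsCompact X) (hXU : X ⊆ U) {L ε : ℝ} (hε : 0 < ε)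
    (hL : ∀ x ∈ X, L + ε ≤ ‖deriv g x‖) :
    ∃ ρ > 0, ∀ᶠ i in l, ∀ x ∈ X, ∀ y ∈ closedBall x ρ, ∀ y' ∈ closedBall x ρ,
      L * dist y y' ≤ dist (G i y) (G i y') := by
  obtain ⟨δ, hδ, hδU⟩ := hX.exists_cthickening_subset_open hU hXU
  have hK : IsCompact (cthickening δ X) := hX.cthickening
  have hg' : ContinuousOn (deriv g) U := ((hg.analyticOnNhd hU).deriv).continuousOn
  obtain ⟨ρ₀, hρ₀, hosc⟩ := Metric.uniformContinuousOn_iff.mp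
    (hK.uniformContinuousOn_of_continuous (hg'.mono hδU)) (ε / 2) (half_pos hε)
  have hclose := (tendstoLocallyUniformlyOn_iff_forall_isCompact hU).mp (hG.deriv hGd hU) _ hδU hK
  rw [Metric.tendstoUniformlyOn_iff] at hclose
  set ρ := min δ (ρ₀ / 2)
  refine ⟨ρ, by positivity, ?_⟩
  filter_upwards [hGd, hclose (ε / 2) (half_pos hε)] with i hGi hclosei x hx y hy y' hy'
  have hball : closedBall x ρ ⊆ cthickening δ X :=
    (closedBall_subset_closedBall (min_le_left _ _)).trans (closedBall_subset_cthickening hx δ)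
  have hderiv : ∀ w ∈ closedBall x ρ, ‖deriv (G i) w - deriv g x‖ ≤ ε := by
    intro w hw
    have hwx : dist w x < ρ₀ := (mem_closedBall.mp hw).trans_lt
      ((min_le_right _ _).trans_lt (half_lt_self hρ₀))
    have h₁ : dist (deriv g w) (deriv (G i) w) < ε / 2 := hclosei w (hball hw)
    have h₂ : dist (deriv g w) (deriv g x) < ε / 2 :=
      hosc w (hball hw) x (hball (mem_closedBall_self (by positivity))) hwx
    rw [← dist_eq_norm]
    linarith [dist_triangle_left (deriv (G i) w) (deriv g x) (deriv g w)]
  have hexp := (convex_closedBall x ρ).mul_norm_sub_le_norm_image_sub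
    (fun w hw => hGi.differentiableAt (hU.mem_nhds (hδU (hball hw)))) hderiv hy hy'
  rw [dist_eq_norm, dist_eq_norm]
  exact (mul_le_mul_of_nonneg_right (by linarith [hL x hx]) (norm_nonneg _)).trans hexp

section IdentityTheorem

variable {E F : Type*} [NormedAddCommGroup E] [NormedSpace ℂ E] [NormedAddCommGroup F]
  [NormedSpace ℂ F] [CompleteSpace F] {f g : E → F}

/-- Restrict to the complex line through `a` and the target point, where the one-variable
identity theorem applies. -/
theorem DifferentiableOn.eqOn_ball_of_eventuallyEq {a : E} {r : ℝ}
    (hf : DifferentiableOn ℂ f (ball a r)) (hg : DifferentiableOn ℂ g (ball a r))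
    (h : f =ᶠ[𝓝 a] g) : EqOn f g (ball a r) := by
  intro μ hμ
  rcases eq_or_ne μ a with rfl | hne
  · exact h.eq_of_nhds
  have hr : 0 < r := pos_of_mem_ball hμ
  set v := μ - a
  have hv : 0 < ‖v‖ := norm_pos_iff.mpr (sub_ne_zero.mpr hne)
  set L : ℂ → E := fun ζ => a + ζ • v
  have hLd : Differentiable ℂ L := (differentiable_id.smul_const v).const_add a
  have hL : MapsTo L (ball 0 (r / ‖v‖)) (ball a r) := by
    intro ζ hζ
    rw [mem_ball_zero_iff, lt_div_iff₀ hv] at hζ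
    simpa [L, dist_eq_norm, norm_smul] using hζ
  have hL₀ : Tendsto L (𝓝 0) (𝓝 a) := by simpa [L] using hLd.continuous.tendsto 0
  have h₁ : (1 : ℂ) ∈ ball 0 (r / ‖v‖) := by
    rw [mem_ball_zero_iff, norm_one, one_lt_div hv]
    simpa [v, dist_eq_norm] using hμ
  have hline := AnalyticOnNhd.eqOn_of_preconnected_of_eventuallyEq
    ((hf.comp hLd.differentiableOn hL).analyticOnNhd isOpen_ball)
    ((hg.comp hLd.differentiableOn hL).analyticOnNhd isOpen_ball) (convex_ball _ _).isPreconnected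
    (mem_ball_self (by positivity)) (hL₀.eventually h) h₁
  simpa [L, v] using hline

theorem DifferentiableOn.eqOn_of_isPreconnected_of_eventuallyEq {N : Set E}
    (hf : DifferentiableOn ℂ f N) (hg : DifferentiableOn ℂ g N) (hN : IsOpen N)
    (hNc : IsPreconnected N) {a : E} (ha : a ∈ N) (h : f =ᶠ[𝓝 a] g) : EqOn f g N := by
  suffices hNS : N ⊆ {x | f =ᶠ[𝓝 x] g} from fun x hx => (hNS hx).eq_of_nhds
  refine hNc.subset_of_closure_inter_subset isOpen_setOfPred_eventually_nhds ⟨a, ha, h⟩ ?_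
  rintro x ⟨hxS, hxN⟩
  obtain ⟨r, hr, hball⟩ := Metric.isOpen_iff.mp hN x hxN
  obtain ⟨y, hyx, hyS⟩ := mem_closure_iff.mp hxS (ball x (r / 2)) isOpen_ball
    (mem_ball_self (half_pos hr))
  have hsub : ball y (r / 2) ⊆ N := (ball_subset_ball' (by linarith [mem_ball.mp hyx])).trans hball
  exact eventuallyEq_of_mem (isOpen_ball.mem_nhds (mem_ball_comm.mp hyx))
    ((hf.mono hsub).eqOn_ball_of_eventuallyEq (hg.mono hsub) hyS)

end IdentityTheorem

namespace IsConjMotion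

variable {E : Type*} [TopologicalSpace E] {F h : E → ℂ → ℂ} {lam₀ lam : E} {Ω X : Set ℂ}
  {N : Set E}

theorem continuousOn_apply (hm : IsConjMotion F lam₀ Ω X N h) (hlam : lam ∈ N) :
    ContinuousOn (h lam) X :=
  hm.1.comp (Continuous.prodMk_right lam).continuousOn fun _ hx => ⟨hlam, hx⟩

theorem eventually_mem_closedBall (hm : IsConjMotion F lam₀ Ω X N h) (hN : N ∈ 𝓝 lam₀)
    (hX : IsCompact X) {ρ : ℝ} (hρ : 0 < ρ) :
    ∀ᶠ lam in 𝓝 lam₀, ∀ x ∈ X, h lam x ∈ closedBall x ρ := by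
  filter_upwards [Metric.tendstoUniformlyOn_iff.mp
    (hm.1.tendstoUniformlyOn_of_isCompact hN hX subset_rfl) ρ hρ] with lam hlam x hx
  have hx' := (hlam x hx).le
  rwa [hm.2.1 x hx, dist_comm] at hx'

theorem iterate_apply (hm : IsConjMotion F lam₀ Ω X N h) (hX : MapsTo (F lam₀) X X)
    (hlam : lam ∈ N) (k : ℕ) : ∀ x ∈ X, (F lam)^[k] (h lam x) = h lam ((F lam₀)^[k] x) :=
  hX.iterate_semiconj_apply (hm.2.2.2.2 lam hlam) k

end IsConjMotion

theorem eventually_eqOn_of_isConjMotion {E : Type*} [TopologicalSpace E] {Λ : Set E}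
    (hΛ : IsOpen Λ) {lam₀ : E} (hl₀ : lam₀ ∈ Λ) {Ω : Set ℂ} (hΩ : IsOpen Ω) {F : E → ℂ → ℂ}
    (hF : IsHolomorphicFamilyOn F Λ Ω) {X : Set ℂ} (hX : IsHypSet (F lam₀) Ω X) {N : Set E}
    (hN : N ∈ 𝓝 lam₀) {h₁ h₂ : E → ℂ → ℂ} (hm₁ : IsConjMotion F lam₀ Ω X N h₁)
    (hm₂ : IsConjMotion F lam₀ Ω X N h₂) :
    ∀ᶠ lam in 𝓝 lam₀, EqOn (h₁ lam) (h₂ lam) X := by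
  obtain ⟨hXc, hXΩ, hXmaps, c, hc, μ, hμ, hderiv⟩ := hX
  -- `3` is the expansion factor `2` plus a margin `1` for the perturbation `λ ≠ λ₀`.
  obtain ⟨k, hk, hk₁⟩ : ∃ k : ℕ, 3 ≤ c * μ ^ k ∧ 1 ≤ k :=
    ((((tendsto_pow_atTop_atTop_of_one_lt hμ).const_mul_atTop hc).eventually_ge_atTop 3).and
      (eventually_ge_atTop 1)).exists
  obtain ⟨V, U, hV, hU, hl₀V, hXU, hiter⟩ := hF.exists_nhds_iterate hΛ hΩ hl₀ hXc hXΩ hXmaps k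
  have hconv : TendstoLocallyUniformlyOn (fun lam => (F lam)^[k]) ((F lam₀)^[k]) (𝓝 lam₀) U :=
    (tendstoLocallyUniformlyOn_iff_forall_isCompact hU).mpr fun K hKU hK =>
      hiter.1.tendstoUniformlyOn_of_isCompact (hV.mem_nhds hl₀V) hK hKU
  obtain ⟨ρ, hρ, hexp⟩ := exists_eventually_expanding_of_tendstoLocallyUniformlyOn (L := 2) hconv
    (eventually_of_mem (hV.mem_nhds hl₀V) hiter.2) (hiter.2 lam₀ hl₀V) hU hXc hXU one_pos
    fun x hx => by linarith [hderiv x hx k hk₁]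
  filter_upwards [hexp, hm₁.eventually_mem_closedBall hN hXc hρ,
    hm₂.eventually_mem_closedBall hN hXc hρ, hN] with lam hexp hh₁ hh₂ hlam
  refine hXc.eqOn_of_dist_expanding (hm₁.continuousOn_apply hlam) (hm₂.continuousOn_apply hlam)
    (hXmaps.iterate k) one_lt_two fun x hx => ?_
  calc 2 * dist (h₁ lam x) (h₂ lam x)
      ≤ dist ((F lam)^[k] (h₁ lam x)) ((F lam)^[k] (h₂ lam x)) :=
        hexp x hx _ (hh₁ x hx) _ (hh₂ x hx)
    _ = dist (h₁ lam ((F lam₀)^[k] x)) (h₂ lam ((F lam₀)^[k] x)) := by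
        rw [hm₁.iterate_apply hXmaps hlam k x hx, hm₂.iterate_apply hXmaps hlam k x hx]

theorem uniqueness_of_holomorphic_motions_general
    {E : Type*} [NormedAddCommGroup E] [NormedSpace ℂ E]
    (Λ : Set E) (hΛ : IsOpen Λ) (lam₀ : E) (hl₀ : lam₀ ∈ Λ)
    (Ω : Set ℂ) (hΩ : IsOpen Ω) (F : E → ℂ → ℂ)
    (hFc : ContinuousOn (fun p : E × ℂ => F p.1 p.2) (Λ ×ˢ Ω))
    (hFz : ∀ lam ∈ Λ, DifferentiableOn ℂ (F lam) Ω)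
    (X : Set ℂ) (hX : IsHypSet (F lam₀) Ω X)
    (N : Set E) (hNo : IsOpen N) (hNc : IsConnected N) (hN₀ : lam₀ ∈ N)
    (h₁ h₂ : E → ℂ → ℂ)
    (hm₁ : IsConjMotion F lam₀ Ω X N h₁) (hm₂ : IsConjMotion F lam₀ Ω X N h₂)
    (hh₁ : ∀ x ∈ X, DifferentiableOn ℂ (fun lam => h₁ lam x) N)
    (hh₂ : ∀ x ∈ X, DifferentiableOn ℂ (fun lam => h₂ lam x) N) :
    ∀ lam ∈ N, ∀ x ∈ X, h₁ lam x = h₂ lam x := by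
  intro lam hlam x hx
  have hloc := eventually_eqOn_of_isConjMotion hΛ hl₀ hΩ ⟨hFc, hFz⟩ hX (hNo.mem_nhds hN₀) hm₁ hm₂
  exact (hh₁ x hx).eqOn_of_isPreconnected_of_eventuallyEq (hh₂ x hx) hNo hNc.isPreconnected hN₀
    (hloc.mono fun _ h => h hx) hlam

/-- Global uniqueness of holomorphic conjugating motions of a hyperbolic set
over a connected open neighborhood of the base point, for a holomorphic family over an open
subset of a complex Banach space. -/
theorem uniqueness_of_holomorphic_motions
    {E : Type*} [NormedAddCommGroup E] [NormedSpace ℂ E] [CompleteSpace E]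
    (Λ : Set E) (hΛ : IsOpen Λ) (lam₀ : E) (hl₀ : lam₀ ∈ Λ)
    (Ω : Set ℂ) (hΩ : IsOpen Ω) (F : E → ℂ → ℂ)
    (hFc : ContinuousOn (fun p : E × ℂ => F p.1 p.2) (Λ ×ˢ Ω))
    (hFz : ∀ lam ∈ Λ, DifferentiableOn ℂ (F lam) Ω)
    (hFl : ∀ z ∈ Ω, DifferentiableOn ℂ (fun lam => F lam z) Λ)
    (X : Set ℂ) (hX : IsHypSet (F lam₀) Ω X)
    (N : Set E) (hNo : IsOpen N) (hNc : IsConnected N) (hN₀ : lam₀ ∈ N) (hNΛ : N ⊆ Λ)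
    (h₁ h₂ : E → ℂ → ℂ)
    (hm₁ : IsConjMotion F lam₀ Ω X N h₁) (hm₂ : IsConjMotion F lam₀ Ω X N h₂)
    (hh₁ : ∀ x ∈ X, DifferentiableOn ℂ (fun lam => h₁ lam x) N)
    (hh₂ : ∀ x ∈ X, DifferentiableOn ℂ (fun lam => h₂ lam x) N) :
    ∀ lam ∈ N, ∀ x ∈ X, h₁ lam x = h₂ lam x :=
  uniqueness_of_holomorphic_motions_general Λ hΛ lam₀ hl₀ Ω hΩ F hFc hFz X hX N hNo hNc hN₀ h₁ h₂
    hm₁ hm₂ hh₁ hh₂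
end
end

section
/- Let e, f ≥ 0 be integers. For each n ∈ ℕ let F_n be the fixed-point-centered Blaschke product with free zeros u_{n,1}, …, u_{n,e} ∈ 𝔻 and G_n the fixed-point-centered Blaschke product with free zeros v_{n,1}, …, v_{n,f} ∈ 𝔻, where u_{n,k} → ū_k ∈ closure(𝔻) and v_{n,j} → v̄_j ∈ closure(𝔻) as n → ∞. Set S_F := {ū_k : |ū_k| = 1} and S_G := {v̄_j : |v̄_j| = 1}, and assume 1 ∉ S_F and 1 ∉ S_G. Let F (resp. G) be the fixed-point-centered Blaschke product whose free zeros are the ū_k with |ū_k| < 1 (resp. the v̄_j with |v̄_j| < 1). Then the compositions F_n ∘ G_n converge to F ∘ G uniformly on every compact subset of ℂ̂ ∖ (G^{-1}(S_F) ∪ S_G), where G^{-1}(S_F) is the preimage of S_F under G viewed as a rational self-map of ℂ̂. -/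
/-!
Write `B_a(ζ) = ζ ∏ₖ bₐₖ(ζ)` with `b_α(ζ) = (1 - ᾱ)(ζ - α) / ((1 - α)(1 - ᾱζ))`. Each factor is
jointly continuous in `(α, ζ)` away from its pole, and when `α` reaches a point of the circle
other than `1` it becomes the constant `1` (off `ζ = α`). Hence `B_a(w) → B̄(w₀)` as
`(a, w) → (ā, w₀)` with `a` in the polydisc, as long as `w₀` avoids the limit zeros on the
circle; near `∞` and near the poles of `B̄` this holds because outside the disc every factor has
modulus at least `1`. Applying this joint continuity to `G_n` and then to `F_n` gives continuous
convergence `F_n ∘ G_n → F ∘ G` at every point of `K`, and continuous convergence to a continuous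
limit on a compact set is uniform.
-/

open Filter Metric Set Topology

noncomputable section

/-- The fixed-point-centered Blaschke product with free zeros `a k`, `k ∈ s`, as a map
`ℂ → ℂ`: `B(z) = λ · z · ∏_{k ∈ s} (z - a k)/(1 - conj (a k) z)` where
`λ = ∏_{k ∈ s} (1 - conj (a k))/(1 - a k)` is the unique unimodular constant with `B 1 = 1`. -/
def blaschkeFun {e : ℕ} (s : Finset (Fin e)) (a : Fin e → ℂ) (z : ℂ) : ℂ :=
  (∏ k ∈ s, (1 - (starRingEnd ℂ) (a k)) / (1 - a k)) * z *
    ∏ k ∈ s, (z - a k) / (1 - (starRingEnd ℂ) (a k) * z)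

/-- The denominator of the Blaschke product, vanishing exactly at its poles. -/
def blaschkeDen {e : ℕ} (s : Finset (Fin e)) (a : Fin e → ℂ) (z : ℂ) : ℂ :=
  ∏ k ∈ s, (1 - (starRingEnd ℂ) (a k) * z)

/-- The Blaschke product viewed as a rational self-map of the Riemann sphere
`ℂ̂ = OnePoint ℂ` (it fixes `∞` since it fixes `0` and has degree `≥` its denominator's). -/
def blaschkeSphere {e : ℕ} (s : Finset (Fin e)) (a : Fin e → ℂ) (w : OnePoint ℂ) :
    OnePoint ℂ :=
  Option.elim (show Option ℂ from w) OnePoint.infty fun z =>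
    if blaschkeDen s a z = 0 then OnePoint.infty else OnePoint.some (blaschkeFun s a z)

/-- The standard stereographic embedding of the Riemann sphere `OnePoint ℂ` onto the unit
sphere in `ℝ³`. -/
def sphereEmbed (w : OnePoint ℂ) : ℝ × ℝ × ℝ :=
  Option.elim (show Option ℂ from w) ((0 : ℝ), (0 : ℝ), (1 : ℝ)) fun z =>
    (2 * z.re / (1 + ‖z‖ ^ 2), 2 * z.im / (1 + ‖z‖ ^ 2),
      (‖z‖ ^ 2 - 1) / (‖z‖ ^ 2 + 1))

/-- A (chordal-type) distance on the Riemann sphere inducing its compact Hausdorff topology,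
hence its unique compatible uniform structure. -/
def sphDist (u v : OnePoint ℂ) : ℝ := dist (sphereEmbed u) (sphereEmbed v)

open OnePoint ComplexConjugate

theorem IsCompact.tendstoUniformlyOn_of_forall_tendsto_prod {ι α β : Type*} [TopologicalSpace α]
    [UniformSpace β] {F : ι → α → β} {f : α → β} {p : Filter ι} {K : Set α} (hK : IsCompact K)
    (hf : ContinuousOn f K)
    (h : ∀ x ∈ K, Tendsto (fun q : ι × α => F q.1 q.2) (p ×ˢ 𝓝[K] x) (𝓝 (f x))) :
    TendstoUniformlyOn F f p K :=
  (tendstoLocallyUniformlyOn_iff_tendstoUniformlyOn_of_compact hK).1 <|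
    tendstoLocallyUniformlyOn_iff_forall_tendsto.2 fun x hx =>
      (((hf x hx).tendsto.comp tendsto_snd).prodMk_nhds (h x hx)).mono_right
        (nhds_le_uniformity _)

theorem sphereEmbed_coe_inv {z : ℂ} (hz : z ≠ 0) :
    sphereEmbed (z⁻¹ : ℂ) =
      (2 * z.re / (1 + ‖z‖ ^ 2), -(2 * z.im / (1 + ‖z‖ ^ 2)), (1 - ‖z‖ ^ 2) / (1 + ‖z‖ ^ 2)) := by
  have hsq : Complex.normSq z = ‖z‖ ^ 2 := Complex.normSq_eq_norm_sq z
  simp only [sphereEmbed, Option.elim, norm_inv, Complex.inv_re, Complex.inv_im, hsq]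
  refine Prod.ext ?_ (Prod.ext ?_ ?_) <;> field_simp <;> ring

theorem continuous_sphereEmbed : Continuous sphereEmbed := by
  have hfin : Continuous fun z : ℂ =>
      (2 * z.re / (1 + ‖z‖ ^ 2), 2 * z.im / (1 + ‖z‖ ^ 2), (‖z‖ ^ 2 - 1) / (‖z‖ ^ 2 + 1)) := by
    fun_prop (disch := intro z; positivity)
  have hinv : Continuous fun z : ℂ =>
      (2 * z.re / (1 + ‖z‖ ^ 2), -(2 * z.im / (1 + ‖z‖ ^ 2)), (1 - ‖z‖ ^ 2) / (1 + ‖z‖ ^ 2)) := by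
    fun_prop (disch := intro z; positivity)
  refine (OnePoint.continuous_iff _).2 ⟨?_, hfin⟩
  rw [coclosedCompact_eq_cocompact, ← Metric.cobounded_eq_cocompact]
  -- `sphereEmbed z` is `hinv z⁻¹`, and `z⁻¹ → 0` as `z → ∞`
  have hlim := (hinv.tendsto 0).comp tendsto_inv₀_cobounded
  refine (hlim.congr' ?_).trans (by norm_num; rfl)
  filter_upwards [Bornology.eventually_ne_cobounded 0] with z hz
  simpa using (sphereEmbed_coe_inv (inv_ne_zero hz)).symm

theorem OnePoint.hasBasis_nhds_infty_norm {E : Type*} [NormedAddCommGroup E] [ProperSpace E] :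
    (𝓝 (∞ : OnePoint E)).HasBasis (fun _ : ℝ => True)
      fun R => ((↑) : E → OnePoint E) '' {z | R < ‖z‖} ∪ {∞} := by
  rw [OnePoint.nhds_infty_eq, coclosedCompact_eq_cocompact, ← Metric.cobounded_eq_cocompact,
    ← comap_norm_atTop]
  exact ((atTop_basis_Ioi.comap _).map _).sup_pure _

def blaschkeFactor (α ζ : ℂ) : ℂ := (1 - conj α) * (ζ - α) / ((1 - α) * (1 - conj α * ζ))

theorem blaschkeFun_eq_mul_prod {e : ℕ} (s : Finset (Fin e)) (a : Fin e → ℂ) (z : ℂ) :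
    blaschkeFun s a z = z * ∏ k ∈ s, blaschkeFactor (a k) z := by
  simp only [blaschkeFun, blaschkeFactor]
  rw [mul_comm _ z, mul_assoc, ← Finset.prod_mul_distrib]
  simp only [div_mul_div_comm]

theorem norm_one_sub_conj_mul_sq_sub_norm_sub_sq (α ζ : ℂ) :
    ‖1 - conj α * ζ‖ ^ 2 - ‖ζ - α‖ ^ 2 = (1 - ‖α‖ ^ 2) * (1 - ‖ζ‖ ^ 2) := by
  simp only [← Complex.normSq_eq_norm_sq, Complex.normSq_apply, Complex.sub_re, Complex.sub_im,
    Complex.one_re, Complex.one_im, Complex.mul_re, Complex.mul_im, Complex.conj_re,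
    Complex.conj_im]
  ring

theorem norm_blaschkeFactor {α : ℂ} (hα : α ≠ 1) (ζ : ℂ) :
    ‖blaschkeFactor α ζ‖ = ‖ζ - α‖ / ‖1 - conj α * ζ‖ := by
  have h : ‖1 - conj α‖ = ‖1 - α‖ := by rw [← Complex.norm_conj]; simp
  rw [blaschkeFactor, norm_div, norm_mul, norm_mul, h,
    mul_div_mul_left _ _ (norm_ne_zero_iff.2 (sub_ne_zero.2 hα.symm))]

theorem one_le_norm_blaschkeFactor {α ζ : ℂ} (hα : ‖α‖ < 1) (hζ : 1 ≤ ‖ζ‖)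
    (hden : 1 - conj α * ζ ≠ 0) : 1 ≤ ‖blaschkeFactor α ζ‖ := by
  have hα1 : α ≠ 1 := by rintro rfl; simp at hα
  rw [norm_blaschkeFactor hα1, le_div_iff₀ (norm_pos_iff.2 hden), one_mul]
  have := norm_one_sub_conj_mul_sq_sub_norm_sub_sq α ζ
  have : (1 - ‖α‖ ^ 2) * (1 - ‖ζ‖ ^ 2) ≤ 0 :=
    mul_nonpos_of_nonneg_of_nonpos (by nlinarith [norm_nonneg α]) (by nlinarith)
  nlinarith [norm_nonneg (1 - conj α * ζ), norm_nonneg (ζ - α)]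

theorem one_sub_conj_mul_ne_zero {α ζ : ℂ} (hα : ‖α‖ = 1) (hζ : ζ ≠ α) :
    1 - conj α * ζ ≠ 0 := by
  have hunit : conj α * α = 1 := by
    rw [Complex.conj_mul', hα]; norm_num
  have hα0 : conj α ≠ 0 := left_ne_zero_of_mul_eq_one hunit
  rw [show 1 - conj α * ζ = conj α * (α - ζ) by linear_combination -hunit]
  exact mul_ne_zero hα0 (sub_ne_zero.2 hζ.symm)

theorem blaschkeFactor_eq_one {α ζ : ℂ} (hα : ‖α‖ = 1) (h1 : α ≠ 1) (hζ : ζ ≠ α) :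
    blaschkeFactor α ζ = 1 := by
  have hunit : conj α * α = 1 := by
    rw [Complex.conj_mul', hα]; norm_num
  rw [blaschkeFactor, div_eq_one_iff_eq
    (mul_ne_zero (sub_ne_zero.2 h1.symm) (one_sub_conj_mul_ne_zero hα hζ))]
  linear_combination (1 - ζ) * hunit

section OutsideDisc

variable {e : ℕ} {s : Finset (Fin e)} {a : Fin e → ℂ} {z : ℂ}

theorem one_le_prod_norm_blaschkeFactor (ha : ∀ k ∈ s, ‖a k‖ < 1) (hz : 1 ≤ ‖z‖)
    (hden : blaschkeDen s a z ≠ 0) : ∀ k ∈ s, 1 ≤ ‖blaschkeFactor (a k) z‖ := fun k hk =>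
  one_le_norm_blaschkeFactor (ha k hk) hz (Finset.prod_ne_zero_iff.1 hden k hk)

theorem norm_le_norm_blaschkeFun (ha : ∀ k ∈ s, ‖a k‖ < 1) (hz : 1 ≤ ‖z‖)
    (hden : blaschkeDen s a z ≠ 0) : ‖z‖ ≤ ‖blaschkeFun s a z‖ := by
  rw [blaschkeFun_eq_mul_prod, norm_mul, norm_prod]
  exact le_mul_of_one_le_right (norm_nonneg z)
    (Finset.one_le_prod (one_le_prod_norm_blaschkeFactor ha hz hden))

theorem norm_blaschkeFactor_le_norm_blaschkeFun (ha : ∀ k ∈ s, ‖a k‖ < 1) (hz : 1 ≤ ‖z‖)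
    (hden : blaschkeDen s a z ≠ 0) {k : Fin e} (hk : k ∈ s) :
    ‖blaschkeFactor (a k) z‖ ≤ ‖blaschkeFun s a z‖ := by
  have h1 := one_le_prod_norm_blaschkeFactor ha hz hden
  rw [blaschkeFun_eq_mul_prod, norm_mul, norm_prod, ← Finset.mul_prod_erase s _ hk]
  have : 1 ≤ ∏ j ∈ s.erase k, ‖blaschkeFactor (a j) z‖ :=
    Finset.one_le_prod fun j hj => h1 j (Finset.mem_of_mem_erase hj)
  calc ‖blaschkeFactor (a k) z‖
      ≤ ‖blaschkeFactor (a k) z‖ * ∏ j ∈ s.erase k, ‖blaschkeFactor (a j) z‖ :=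
        le_mul_of_one_le_right (norm_nonneg _) this
    _ ≤ _ := le_mul_of_one_le_left (by positivity) hz

end OutsideDisc

section BlaschkeSphere

variable {e : ℕ} {s : Finset (Fin e)}

theorem blaschkeSphere_coe (a : Fin e → ℂ) (z : ℂ) :
    blaschkeSphere s a z = if blaschkeDen s a z = 0 then ∞ else ↑(blaschkeFun s a z) := rfl

theorem blaschkeSphere_coe_mem_of_lt_norm {a : Fin e → ℂ} {z : ℂ} {R : ℝ}
    (h : blaschkeDen s a z ≠ 0 → R < ‖blaschkeFun s a z‖) :
    blaschkeSphere s a z ∈ ((↑) : ℂ → OnePoint ℂ) '' {w | R < ‖w‖} ∪ {∞} := by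
  rw [blaschkeSphere_coe]
  split_ifs with hden
  · exact Or.inr rfl
  · exact Or.inl ⟨_, h hden, rfl⟩

theorem tendsto_blaschkeSphere_nhds_infty :
    Tendsto (fun p : (Fin e → ℂ) × OnePoint ℂ => blaschkeSphere s p.1 p.2)
      (𝓟 {a | ∀ k ∈ s, ‖a k‖ < 1} ×ˢ 𝓝 ∞) (𝓝 ∞) := by
  refine hasBasis_nhds_infty_norm.tendsto_right_iff.2 fun R _ => ?_
  filter_upwards [prod_mem_prod (mem_principal_self _)
    (hasBasis_nhds_infty_norm.mem_of_mem (i := max 1 R) trivial)]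
  rintro ⟨a, w⟩ ⟨ha, ⟨z, hz, rfl⟩ | rfl⟩
  · have hz : max 1 R < ‖z‖ := hz
    exact blaschkeSphere_coe_mem_of_lt_norm fun hden => (le_max_right 1 R).trans_lt
      (hz.trans_le (norm_le_norm_blaschkeFun ha ((le_max_left 1 R).trans hz.le) hden))
  · exact Or.inr rfl

theorem tendsto_blaschkeSphere_of_pole {abar : Fin e → ℂ} {z₀ : ℂ} {k₀ : Fin e} (hk₀ : k₀ ∈ s)
    (hk₀1 : ‖abar k₀‖ < 1) (hpole : 1 - conj (abar k₀) * z₀ = 0) :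
    Tendsto (fun p : (Fin e → ℂ) × ℂ => blaschkeSphere s p.1 p.2)
      (𝓝[{a | ∀ k ∈ s, ‖a k‖ < 1}] abar ×ˢ 𝓝 z₀) (𝓝 ∞) := by
  have hprod : ‖abar k₀‖ * ‖z₀‖ = 1 := by
    rw [← Complex.norm_conj, ← norm_mul, ← sub_eq_zero.1 hpole, norm_one]
  have hz₀ : 1 < ‖z₀‖ := by nlinarith [norm_nonneg (abar k₀)]
  set c := ‖z₀ - abar k₀‖
  have hc : 0 < c := norm_pos_iff.2 (sub_ne_zero.2 fun h => by rw [h] at hz₀; linarith)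
  have hnhds : 𝓝[{a | ∀ k ∈ s, ‖a k‖ < 1}] abar ×ˢ 𝓝 z₀ ≤ 𝓝 (abar, z₀) := by
    rw [nhds_prod_eq]; exact prod_mono nhdsWithin_le_nhds le_rfl
  -- near the pole, the factor of index `k₀` has a numerator near `c` and a denominator near `0`
  have hnorm : ContinuousAt (fun p : (Fin e → ℂ) × ℂ => ‖p.2‖) (abar, z₀) := by fun_prop
  have hnum : ContinuousAt (fun p : (Fin e → ℂ) × ℂ => ‖p.2 - p.1 k₀‖) (abar, z₀) := by fun_prop
  have hden : ContinuousAt (fun p : (Fin e → ℂ) × ℂ => ‖1 - conj (p.1 k₀) * p.2‖) (abar, z₀) := by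
    fun_prop
  refine hasBasis_nhds_infty_norm.tendsto_right_iff.2 fun R _ => ?_
  set R' := max R 1
  have hR' : 0 < R' := lt_max_of_lt_right one_pos
  have hden₀ : ‖1 - conj (abar k₀) * z₀‖ < c / 2 / R' := by simp [hpole]; positivity
  filter_upwards [tendsto_fst.eventually self_mem_nhdsWithin,
    hnhds (hnorm.eventually_const_lt hz₀), hnhds (hnum.eventually_const_lt (half_lt_self hc)),
    hnhds (hden.eventually_lt_const hden₀)]
    with ⟨a, z⟩ ha hz hnum hden
  refine blaschkeSphere_coe_mem_of_lt_norm fun hD => ?_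
  have hD₀ : 0 < ‖1 - conj (a k₀) * z‖ := norm_pos_iff.2 (Finset.prod_ne_zero_iff.1 hD k₀ hk₀)
  have ha₀ : a k₀ ≠ 1 := by rintro h; simpa [h] using ha k₀ hk₀
  calc R ≤ R' := le_max_left R 1
    _ < ‖blaschkeFactor (a k₀) z‖ := by
      rw [norm_blaschkeFactor ha₀, lt_div_iff₀ hD₀]
      rw [lt_div_iff₀ hR'] at hden
      dsimp only at hnum
      linarith
    _ ≤ _ := norm_blaschkeFactor_le_norm_blaschkeFun ha hz.le hD hk₀

theorem tendsto_blaschkeSphere_of_not_pole {abar : Fin e → ℂ} {z₀ : ℂ}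
    (hle : ∀ k ∈ s, ‖abar k‖ ≤ 1) (hne : ∀ k ∈ s, ‖abar k‖ = 1 → abar k ≠ 1)
    (hz₀ : ∀ k ∈ s, ‖abar k‖ = 1 → z₀ ≠ abar k)
    (hden : blaschkeDen {k ∈ s | ‖abar k‖ < 1} abar z₀ ≠ 0) :
    Tendsto (fun p : (Fin e → ℂ) × ℂ => blaschkeSphere s p.1 p.2) (𝓝 (abar, z₀))
      (𝓝 (blaschkeSphere {k ∈ s | ‖abar k‖ < 1} abar z₀)) := by
  have hfac : ∀ k ∈ s, abar k ≠ 1 ∧ 1 - conj (abar k) * z₀ ≠ 0 := by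
    intro k hk
    rcases (hle k hk).lt_or_eq with hlt | heq
    · exact ⟨by rintro h; simp [h] at hlt,
        Finset.prod_ne_zero_iff.1 hden k (Finset.mem_filter.2 ⟨hk, hlt⟩)⟩
    · exact ⟨hne k hk heq, one_sub_conj_mul_ne_zero heq (hz₀ k hk heq)⟩
  -- a zero that reached the circle contributes the factor `1` at `z₀`, so it drops out
  have hval : z₀ * ∏ k ∈ s, blaschkeFactor (abar k) z₀ =
      blaschkeFun {k ∈ s | ‖abar k‖ < 1} abar z₀ := by
    rw [blaschkeFun_eq_mul_prod, Finset.prod_filter_of_ne]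
    intro k hk hne1
    by_contra hlt
    have heq := le_antisymm (hle k hk) (not_lt.1 hlt)
    exact hne1 (blaschkeFactor_eq_one heq (hne k hk heq) (hz₀ k hk heq))
  have hcont : ContinuousAt
      (fun p : (Fin e → ℂ) × ℂ => p.2 * ∏ k ∈ s, blaschkeFactor (p.1 k) p.2) (abar, z₀) :=
    continuousAt_snd.mul <| tendsto_finsetProd s fun k hk =>
      ContinuousAt.div (by fun_prop) (by fun_prop)
        (mul_ne_zero (sub_ne_zero.2 (hfac k hk).1.symm) (hfac k hk).2)
  have hden' : ∀ᶠ p in 𝓝 (abar, z₀), blaschkeDen s p.1 p.2 ≠ 0 :=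
    ContinuousAt.eventually_ne (by unfold blaschkeDen; fun_prop)
      (Finset.prod_ne_zero_iff.2 fun k hk => (hfac k hk).2)
  rw [blaschkeSphere_coe, if_neg hden, ← hval]
  refine ((OnePoint.continuous_coe.tendsto _).comp hcont).congr' ?_
  filter_upwards [hden'] with p hp
  rw [blaschkeSphere_coe, if_neg hp, blaschkeFun_eq_mul_prod]
  rfl

theorem tendsto_blaschkeSphere {abar : Fin e → ℂ} {w₀ : OnePoint ℂ}
    (hle : ∀ k ∈ s, ‖abar k‖ ≤ 1) (hne : ∀ k ∈ s, ‖abar k‖ = 1 → abar k ≠ 1)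
    (hw₀ : ∀ k ∈ s, ‖abar k‖ = 1 → w₀ ≠ abar k) :
    Tendsto (fun p : (Fin e → ℂ) × OnePoint ℂ => blaschkeSphere s p.1 p.2)
      (𝓝[{a | ∀ k ∈ s, ‖a k‖ < 1}] abar ×ˢ 𝓝 w₀)
      (𝓝 (blaschkeSphere {k ∈ s | ‖abar k‖ < 1} abar w₀)) := by
  induction w₀ using OnePoint.rec with
  | infty => exact tendsto_blaschkeSphere_nhds_infty.mono_left (prod_mono inf_le_right le_rfl)
  | coe z₀ =>
    rw [OnePoint.nhds_coe_eq, prod_map_right, tendsto_map'_iff]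
    by_cases hden : blaschkeDen {k ∈ s | ‖abar k‖ < 1} abar z₀ = 0
    · obtain ⟨k₀, hk₀, hpole⟩ := Finset.prod_eq_zero_iff.1 hden
      rw [Finset.mem_filter] at hk₀
      rw [blaschkeSphere_coe, if_pos hden]
      exact tendsto_blaschkeSphere_of_pole hk₀.1 hk₀.2 hpole
    · refine (tendsto_blaschkeSphere_of_not_pole hle hne (fun k hk h => ?_) hden).mono_left ?_
      · exact fun heq => hw₀ k hk h (congrArg _ heq)
      · rw [nhds_prod_eq]; exact prod_mono nhdsWithin_le_nhds le_rfl

theorem Filter.Tendsto.blaschkeSphere {α : Type*} {l : Filter α} {a : α → Fin e → ℂ}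
    {abar : Fin e → ℂ} {w : α → OnePoint ℂ} {w₀ : OnePoint ℂ}
    (ha : Tendsto a l (𝓝 abar)) (haD : ∀ᶠ x in l, ∀ k ∈ s, ‖a x k‖ < 1)
    (hw : Tendsto w l (𝓝 w₀))
    (hle : ∀ k ∈ s, ‖abar k‖ ≤ 1) (hne : ∀ k ∈ s, ‖abar k‖ = 1 → abar k ≠ 1)
    (hw₀ : ∀ k ∈ s, ‖abar k‖ = 1 → w₀ ≠ abar k) :
    Tendsto (fun x => _root_.blaschkeSphere s (a x) (w x)) l
      (𝓝 (_root_.blaschkeSphere {k ∈ s | ‖abar k‖ < 1} abar w₀)) :=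
  (tendsto_blaschkeSphere hle hne hw₀).comp <|
    (show Tendsto a l (𝓝[{a | ∀ k ∈ s, ‖a k‖ < 1}] abar) from
      tendsto_nhdsWithin_iff.2 ⟨ha, haD⟩).prodMk hw

theorem continuous_blaschkeSphere {a : Fin e → ℂ} (ha : ∀ k ∈ s, ‖a k‖ < 1) :
    Continuous (blaschkeSphere s a) := by
  refine continuous_iff_continuousAt.2 fun w => ?_
  have h := tendsto_const_nhds.blaschkeSphere (Eventually.of_forall fun _ => ha)
    (tendsto_id (x := 𝓝 w)) (fun k hk => (ha k hk).le) (fun k hk h => absurd h (ha k hk).ne)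
    (fun k hk h => absurd h (ha k hk).ne)
  rwa [Finset.filter_true_of_mem ha] at h

end BlaschkeSphere

/-- Under degeneration of the free zeros, compositions of fixed-point-
centered Blaschke products converge: `F_n ∘ G_n → F ∘ G` uniformly on every compact subset of
`ℂ̂ ∖ (G⁻¹(S_F) ∪ S_G)`, where `S_F = {ū k : |ū k| = 1}` and `S_G = {v̄ j : |v̄ j| = 1}`. -/
theorem blaschke_composition_degenerate_convergence
    (e₁ e₂ : ℕ)
    (u : ℕ → Fin e₁ → ℂ) (ubar : Fin e₁ → ℂ)
    (v : ℕ → Fin e₂ → ℂ) (vbar : Fin e₂ → ℂ)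
    (hu : ∀ n k, ‖u n k‖ < 1)
    (hv : ∀ n j, ‖v n j‖ < 1)
    (humem : ∀ k, ubar k ∈ closure (Metric.ball (0 : ℂ) 1))
    (hvmem : ∀ j, vbar j ∈ closure (Metric.ball (0 : ℂ) 1))
    (huc : ∀ k, Tendsto (fun n => u n k) atTop (𝓝 (ubar k)))
    (hvc : ∀ j, Tendsto (fun n => v n j) atTop (𝓝 (vbar j)))
    (hSF : ∀ k, ‖ubar k‖ = 1 → ubar k ≠ 1)
    (hSG : ∀ j, ‖vbar j‖ = 1 → vbar j ≠ 1) :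
    ∀ K : Set (OnePoint ℂ), IsCompact K →
      (∀ w ∈ K,
        (∀ j, ‖vbar j‖ = 1 → w ≠ OnePoint.some (vbar j)) ∧
        (∀ k, ‖ubar k‖ = 1 →
          blaschkeSphere (Finset.univ.filter fun j => ‖vbar j‖ < 1) vbar w ≠
            OnePoint.some (ubar k))) →
      ∀ ε : ℝ, 0 < ε → ∀ᶠ n in atTop, ∀ w ∈ K,
        sphDist
          (blaschkeSphere Finset.univ (u n) (blaschkeSphere Finset.univ (v n) w))
          (blaschkeSphere (Finset.univ.filter fun k => ‖ubar k‖ < 1) ubar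
            (blaschkeSphere (Finset.univ.filter fun j => ‖vbar j‖ < 1) vbar w))
          < ε := by
  intro K hK hKcond ε hε
  have hule : ∀ k, ‖ubar k‖ ≤ 1 := fun k => by simpa [closure_ball _ one_ne_zero] using humem k
  have hvle : ∀ j, ‖vbar j‖ ≤ 1 := fun j => by simpa [closure_ball _ one_ne_zero] using hvmem j
  set F := blaschkeSphere (Finset.univ.filter fun k => ‖ubar k‖ < 1) ubar
  set G := blaschkeSphere (Finset.univ.filter fun j => ‖vbar j‖ < 1) vbar
  set Φ : ℕ → OnePoint ℂ → ℝ × ℝ × ℝ := fun n w =>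
    sphereEmbed (blaschkeSphere Finset.univ (u n) (blaschkeSphere Finset.univ (v n) w))
  have hcont : Continuous (sphereEmbed ∘ F ∘ G) :=
    continuous_sphereEmbed.comp <|
      (continuous_blaschkeSphere fun _ hk => (Finset.mem_filter.1 hk).2).comp
        (continuous_blaschkeSphere fun _ hj => (Finset.mem_filter.1 hj).2)
  have hlim : ∀ w₀ ∈ K, Tendsto (fun p : ℕ × OnePoint ℂ => Φ p.1 p.2) (atTop ×ˢ 𝓝[K] w₀)
      (𝓝 (sphereEmbed (F (G w₀)))) := by
    intro w₀ hw₀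
    have hw : Tendsto (Prod.snd : ℕ × OnePoint ℂ → _) (atTop ×ˢ 𝓝[K] w₀) (𝓝 w₀) :=
      tendsto_snd.mono_right nhdsWithin_le_nhds
    have hG := ((tendsto_pi_nhds.2 hvc).comp tendsto_fst).blaschkeSphere (s := Finset.univ)
      (Eventually.of_forall fun p j _ => hv p.1 j) hw (fun j _ => hvle j) (fun j _ => hSG j)
      (fun j _ => (hKcond w₀ hw₀).1 j)
    exact (continuous_sphereEmbed.tendsto _).comp <|
      ((tendsto_pi_nhds.2 huc).comp tendsto_fst).blaschkeSphere (s := Finset.univ)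
        (Eventually.of_forall fun p k _ => hu p.1 k) hG (fun k _ => hule k) (fun k _ => hSF k)
        (fun k _ => (hKcond w₀ hw₀).2 k)
  filter_upwards [Metric.tendstoUniformlyOn_iff.1
    (hK.tendstoUniformlyOn_of_forall_tendsto_prod hcont.continuousOn hlim) ε hε] with n hn w hw
  rw [sphDist, dist_comm]
  exact hn w hw
end
end
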